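/- Let X be a finite set with probability measure μ_X, let Ω_X ⊂ L^∞(X×X;μ_X⊗μ_X) be a compact set of kernels with the metric d_{Ω_X,p} induced by the L^p norm, and ν_X a probability measure on Ω_X. Let X_{T_N} be the empirical pm-net built from N i.i.d. samples t_1,…,t_N from ν_X with empirical measure ν_N. Then GW_C(X_{T_N}, X) ≤ W_q^{d_{Ω_X,p}}(ν_N, ν_X), where C is the cost structure with parameters p∈[1,∞], q∈[1,∞) allowing couplings of both the underlying measures and the parameter measures. -/

import Mathlib

open Finset

/-- Coupling predicate for finite probability vectors. -/
def IsCoupling {X Y : Type*} [Fintype X] [Fintype Y]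
    (μX : X → ℝ) (μY : Y → ℝ) (π : X → Y → ℝ) : Prop :=
  (∀ x y, 0 ≤ π x y) ∧ (∀ x, ∑ y, π x y = μX x) ∧ (∀ y, ∑ x, π x y = μY y)

/-- The `p`-distortion of a coupling with respect to two kernels. -/
noncomputable def dis {X Y : Type*} [Fintype X] [Fintype Y]
    (p : ℝ) (π : X → Y → ℝ) (f : X → X → ℝ) (g : Y → Y → ℝ) : ℝ :=
  (∑ x, ∑ y, ∑ x', ∑ y', |f x x' - g y y'| ^ p * (π x y * π x' y')) ^ (1 / p)

/-
Every coupling `ξ` of the empirical measure with `νX` is also admissible for the GW cost once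
it is paired with the diagonal coupling of `μX` with itself, and against the diagonal coupling
the distortion of two kernels is exactly their `L^p(μX ⊗ μX)` distance. So each Wasserstein
cost is a GW cost, and the infima compare; if no coupling `ξ` exists, both are `sInf ∅`.
-/

theorem csInf_le_csInf_of_nonempty_imp {α : Type*} [ConditionallyCompleteLattice α]
    {s t : Set α} (ht : BddBelow t) (hst : s ⊆ t) (hne : t.Nonempty → s.Nonempty) :
    sInf t ≤ sInf s := by
  rcases s.eq_empty_or_nonempty with rfl | hs
  · rw [Set.not_nonempty_iff_eq_empty.mp (mt hne Set.not_nonempty_empty)]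
  · exact csInf_le_csInf ht hs hst

section Coupling

variable {X Y : Type*} [Fintype X] [Fintype Y]

def diagCoupling [DecidableEq X] (μ : X → ℝ) (x y : X) : ℝ :=
  if x = y then μ x else 0

theorem isCoupling_diagCoupling [DecidableEq X] {μ : X → ℝ} (hμ : ∀ x, 0 ≤ μ x) :
    IsCoupling μ μ (diagCoupling μ) := by
  refine ⟨fun x y => ?_, fun x => ?_, fun y => ?_⟩
  · unfold diagCoupling
    split_ifs
    exacts [hμ x, le_rfl]
  · simp [diagCoupling]
  · simp [diagCoupling]

theorem dis_nonneg {p : ℝ} {π : X → Y → ℝ} (hπ : ∀ x y, 0 ≤ π x y)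
    (f : X → X → ℝ) (g : Y → Y → ℝ) : 0 ≤ dis p π f g :=
  Real.rpow_nonneg (sum_nonneg fun _ _ => sum_nonneg fun _ _ => sum_nonneg fun _ _ =>
    sum_nonneg fun _ _ => mul_nonneg (Real.rpow_nonneg (abs_nonneg _) p)
      (mul_nonneg (hπ _ _) (hπ _ _))) _

theorem dis_diagCoupling [DecidableEq X] (p : ℝ) (μ : X → ℝ) (f g : X → X → ℝ) :
    dis p (diagCoupling μ) f g =
      (∑ x, ∑ x', |f x x' - g x x'| ^ p * (μ x * μ x')) ^ (1 / p) := by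
  unfold dis
  congr 1
  refine sum_congr rfl fun x _ => ?_
  rw [sum_comm]
  refine sum_congr rfl fun x' _ => ?_
  simp [diagCoupling, mul_ite, ite_mul, sum_ite_eq]

end Coupling

theorem empiricalGW_le_wasserstein_general {X Ω : Type*} [Fintype X] [Fintype Ω]
    (μX : X → ℝ) (νX : Ω → ℝ)
    (hμX0 : ∀ x, 0 ≤ μX x)
    (ω : Ω → X → X → ℝ)
    (p q : ℝ)
    (N : ℕ) (T : Fin N → Ω) :
    let dLp : (X → X → ℝ) → (X → X → ℝ) → ℝ := fun f g =>
      (∑ x, ∑ x', |f x x' - g x x'| ^ p * (μX x * μX x')) ^ (1 / p)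
    let GWC : ℝ := sInf {r : ℝ | ∃ (ξ : Fin N → Ω → ℝ) (π : X → X → ℝ),
      IsCoupling (fun _ : Fin N => (1 : ℝ) / N) νX ξ ∧ IsCoupling μX μX π ∧
      r = (∑ i, ∑ s, dis p π (ω (T i)) (ω s) ^ q * ξ i s) ^ (1 / q)}
    let W : ℝ := sInf {r : ℝ | ∃ ξ : Fin N → Ω → ℝ,
      IsCoupling (fun _ : Fin N => (1 : ℝ) / N) νX ξ ∧
      r = (∑ i, ∑ s, dLp (ω (T i)) (ω s) ^ q * ξ i s) ^ (1 / q)}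
    GWC ≤ W := by
  intro dLp GWC W
  classical
  refine csInf_le_csInf_of_nonempty_imp ⟨0, ?_⟩ ?_ ?_
  · rintro _ ⟨ξ, π, hξ, hπ, rfl⟩
    exact Real.rpow_nonneg (sum_nonneg fun i _ => sum_nonneg fun s _ =>
      mul_nonneg (Real.rpow_nonneg (dis_nonneg hπ.1 _ _) q) (hξ.1 i s)) _
  · rintro _ ⟨ξ, hξ, rfl⟩
    exact ⟨ξ, diagCoupling μX, hξ, isCoupling_diagCoupling hμX0,
      by simp only [dis_diagCoupling, dLp]⟩
  · rintro ⟨_, ξ, -, hξ, -, -⟩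
    exact ⟨_, ξ, hξ, rfl⟩

/-- The parameterized GW distance between the empirical pm-net built from samples
`T : Fin N → Ω` (with uniform empirical weights `1/N`) and the full random measure
network model `(X, μX, Ω, νX)` is bounded above by the `q`-Wasserstein distance between
the empirical measure and `νX`, with ground metric the `L^p(μX ⊗ μX)` distance between
kernels. -/
theorem empiricalGW_le_wasserstein {X Ω : Type*} [Fintype X] [Fintype Ω]
    (μX : X → ℝ) (νX : Ω → ℝ)
    (hμX0 : ∀ x, 0 ≤ μX x) (hμX1 : ∑ x, μX x = 1)
    (hνX0 : ∀ s, 0 ≤ νX s) (hνX1 : ∑ s, νX s = 1)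
    (ω : Ω → X → X → ℝ)
    (p q : ℝ) (hp : 1 ≤ p) (hq : 1 ≤ q)
    (N : ℕ) (hN : 0 < N) (T : Fin N → Ω) :
    let dLp : (X → X → ℝ) → (X → X → ℝ) → ℝ := fun f g =>
      (∑ x, ∑ x', |f x x' - g x x'| ^ p * (μX x * μX x')) ^ (1 / p)
    let GWC : ℝ := sInf {r : ℝ | ∃ (ξ : Fin N → Ω → ℝ) (π : X → X → ℝ),
      IsCoupling (fun _ : Fin N => (1 : ℝ) / N) νX ξ ∧ IsCoupling μX μX π ∧
      r = (∑ i, ∑ s, dis p π (ω (T i)) (ω s) ^ q * ξ i s) ^ (1 / q)}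
    let W : ℝ := sInf {r : ℝ | ∃ ξ : Fin N → Ω → ℝ,
      IsCoupling (fun _ : Fin N => (1 : ℝ) / N) νX ξ ∧
      r = (∑ i, ∑ s, dLp (ω (T i)) (ω s) ^ q * ξ i s) ^ (1 / q)}
    GWC ≤ W :=
  empiricalGW_le_wasserstein_general μX νX hμX0 ω p q N T
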